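/- Under the SGD setup with f τ-weakly-quasi-convex, if 0 < h ≤ τ/(2L) then for every k ≥ 0 the ψ-weighted average of expected suboptimalities satisfies (1/φ_{k+1}) Σ_{i=0}^k ψ_i · E[f(x_i) − f(x⋆)] ≤ ‖x₀ − x⋆‖² / (τ h φ_{k+1}) + (d h σ⋆² / (τ φ_{k+1})) · Σ_{i=0}^k ψ_i² / b_i. -/

import Mathlib

/-!
Write `x_{k+1} - x⋆ = (x_k - η_k ∇f(x_k) - x⋆) - η_k (𝒢_k - ∇f(x_k))`. The first part is
`F_k`-measurable and the noise is conditionally centred, so the cross term has zero expectation and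
`E‖x_{k+1} - x⋆‖² = E‖x_k - η_k ∇f(x_k) - x⋆‖² + η_k² E‖𝒢_k - ∇f(x_k)‖²`. For the deterministic
step, weak quasi-convexity and `‖∇f(z)‖² ≤ 2L (f(z) - f(x⋆))` give
`‖z - η ∇f(z) - x⋆‖² ≤ ‖z - x⋆‖² - τ η (f(z) - f(x⋆))` as soon as `2Lη ≤ τ`. Telescoping
`E‖x_{i+1} - x⋆‖² ≤ E‖x_i - x⋆‖² - τ h ψ_i E[f(x_i) - f(x⋆)] + h² ψ_i² d σ⋆² / b_i` over `i ≤ k`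
and dropping `E‖x_{k+1} - x⋆‖² ≥ 0` gives the bound.
-/

open MeasureTheory
open scoped RealInnerProductSpace

section Smooth

variable {E : Type*} [NormedAddCommGroup E] [InnerProductSpace ℝ E] [CompleteSpace E]
  {f : E → ℝ} {L : ℝ}

theorem hasDerivAt_comp_add_smul (hf : Differentiable ℝ f) (x v : E) (t : ℝ) :
    HasDerivAt (fun s : ℝ => f (x + s • v)) ⟪gradient f (x + t • v), v⟫ t := by
  have hline : HasDerivAt (fun s : ℝ => x + s • v) v t := by
    simpa using ((hasDerivAt_id t).smul_const v).const_add x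
  have := (hf _).hasGradientAt.hasFDerivAt.comp_hasDerivAt t hline
  rwa [InnerProductSpace.toDual_apply_apply] at this

/-- `t ↦ f (x + t • v) - t ⟪∇f x, v⟫ - L t² ‖v‖² / 2` is antitone on `[0, ∞)`. -/
theorem le_add_inner_gradient_add_of_lipschitz_gradient (hf : Differentiable ℝ f)
    (hL : ∀ x y, ‖gradient f x - gradient f y‖ ≤ L * ‖x - y‖) (x y : E) :
    f y ≤ f x + ⟪gradient f x, y - x⟫ + L / 2 * ‖y - x‖ ^ 2 := by
  set v := y - x
  let g : ℝ → ℝ := fun t => f (x + t • v) - t * ⟪gradient f x, v⟫ - L / 2 * t ^ 2 * ‖v‖ ^ 2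
  have hg : ∀ t, HasDerivAt g
      (⟪gradient f (x + t • v), v⟫ - ⟪gradient f x, v⟫ - L * t * ‖v‖ ^ 2) t := fun t => by
    refine (((hasDerivAt_comp_add_smul hf x v t).sub
      ((hasDerivAt_id' t).mul_const ⟪gradient f x, v⟫)).sub
      (((hasDerivAt_pow 2 t).const_mul (L / 2)).mul_const (‖v‖ ^ 2))).congr_deriv ?_
    simp only [one_mul, Nat.cast_ofNat]
    ring
  have hg' : ∀ t ∈ interior (Set.Ici (0 : ℝ)),
      ⟪gradient f (x + t • v), v⟫ - ⟪gradient f x, v⟫ - L * t * ‖v‖ ^ 2 ≤ 0 := by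
    intro t ht
    rw [interior_Ici, Set.mem_Ioi] at ht
    rw [sub_nonpos]
    have hlip : ‖gradient f (x + t • v) - gradient f x‖ ≤ L * (t * ‖v‖) := by
      simpa [norm_smul, abs_of_pos ht] using hL (x + t • v) x
    calc ⟪gradient f (x + t • v), v⟫ - ⟪gradient f x, v⟫
        = ⟪gradient f (x + t • v) - gradient f x, v⟫ := (inner_sub_left _ _ _).symm
      _ ≤ ‖gradient f (x + t • v) - gradient f x‖ * ‖v‖ := real_inner_le_norm _ _
      _ ≤ L * (t * ‖v‖) * ‖v‖ := by gcongr
      _ = L * t * ‖v‖ ^ 2 := by ring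
  have hanti : AntitoneOn g (Set.Ici 0) :=
    antitoneOn_of_hasDerivWithinAt_nonpos (convex_Ici 0)
      (fun t _ => (hg t).continuousAt.continuousWithinAt)
      (fun t _ => (hg t).hasDerivWithinAt) hg'
  have h01 := hanti Set.self_mem_Ici (zero_le_one' ℝ) zero_le_one
  simp only [g, zero_smul, one_smul, add_zero, zero_mul, one_mul, sub_zero, one_pow,
    ne_eq, OfNat.ofNat_ne_zero, not_false_eq_true, zero_pow, mul_one] at h01
  rw [show x + v = y from add_sub_cancel x y] at h01
  linarith

variable {xstar : E}

theorem gradient_eq_zero_of_forall_le (hmin : ∀ x, f xstar ≤ f x) :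
    gradient f xstar = 0 := by
  simp [gradient, IsLocalMin.fderiv_eq_zero (Filter.Eventually.of_forall hmin)]

theorem continuous_gradient_of_lipschitz
    (hL : ∀ x y, ‖gradient f x - gradient f y‖ ≤ L * ‖x - y‖) : Continuous (gradient f) :=
  (LipschitzWith.of_dist_le' fun x y => by simpa only [dist_eq_norm] using hL x y).continuous

theorem norm_gradient_le_of_lipschitz_gradient
    (hL : ∀ x y, ‖gradient f x - gradient f y‖ ≤ L * ‖x - y‖) (hmin : ∀ x, f xstar ≤ f x)
    (z : E) : ‖gradient f z‖ ≤ L * ‖z - xstar‖ := by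
  simpa [gradient_eq_zero_of_forall_le hmin] using hL z xstar

theorem sub_le_mul_sq_norm_sub_of_lipschitz_gradient (hf : Differentiable ℝ f)
    (hL : ∀ x y, ‖gradient f x - gradient f y‖ ≤ L * ‖x - y‖) (hmin : ∀ x, f xstar ≤ f x)
    (z : E) : f z - f xstar ≤ L / 2 * ‖z - xstar‖ ^ 2 := by
  have := le_add_inner_gradient_add_of_lipschitz_gradient hf hL xstar z
  rw [gradient_eq_zero_of_forall_le hmin, inner_zero_left, add_zero] at this
  linarith

/-- `f x⋆ ≤ f (z - L⁻¹ • ∇f z) ≤ f z - ‖∇f z‖² / (2L)` by the descent lemma. -/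
theorem sq_norm_gradient_le_of_lipschitz_gradient (hf : Differentiable ℝ f)
    (hL : ∀ x y, ‖gradient f x - gradient f y‖ ≤ L * ‖x - y‖) (hL0 : 0 < L)
    (hmin : ∀ x, f xstar ≤ f x) (z : E) :
    ‖gradient f z‖ ^ 2 ≤ 2 * L * (f z - f xstar) := by
  have hdesc := le_add_inner_gradient_add_of_lipschitz_gradient hf hL z (z - L⁻¹ • gradient f z)
  rw [sub_sub_cancel_left, inner_neg_right, real_inner_smul_right, real_inner_self_eq_norm_sq,
    norm_neg, norm_smul, mul_pow, Real.norm_eq_abs, sq_abs] at hdesc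
  have hstep : L / 2 * ((L⁻¹) ^ 2 * ‖gradient f z‖ ^ 2) = L⁻¹ * ‖gradient f z‖ ^ 2 / 2 := by
    field_simp
  have hdecrease : L⁻¹ * ‖gradient f z‖ ^ 2 ≤ 2 * (f z - f xstar) := by
    linarith [hmin (z - L⁻¹ • gradient f z)]
  calc ‖gradient f z‖ ^ 2 = L * (L⁻¹ * ‖gradient f z‖ ^ 2) := by field_simp
    _ ≤ L * (2 * (f z - f xstar)) := by gcongr
    _ = 2 * L * (f z - f xstar) := by ring

theorem norm_sub_smul_gradient_sub_sq_le (hf : Differentiable ℝ f)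
    (hL : ∀ x y, ‖gradient f x - gradient f y‖ ≤ L * ‖x - y‖) (hL0 : 0 < L)
    (hmin : ∀ x, f xstar ≤ f x) {τ : ℝ}
    (hwqc : ∀ z, τ * (f z - f xstar) ≤ ⟪gradient f z, z - xstar⟫)
    {η : ℝ} (hη : 0 ≤ η) (hητ : 2 * L * η ≤ τ) (z : E) :
    ‖z - η • gradient f z - xstar‖ ^ 2 ≤ ‖z - xstar‖ ^ 2 - τ * η * (f z - f xstar) := by
  have hgap : 0 ≤ f z - f xstar := sub_nonneg.mpr (hmin z)
  have hexpand : ‖z - η • gradient f z - xstar‖ ^ 2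
      = ‖z - xstar‖ ^ 2 - 2 * η * ⟪gradient f z, z - xstar⟫ + η ^ 2 * ‖gradient f z‖ ^ 2 := by
    rw [sub_right_comm, norm_sub_sq_real, real_inner_smul_right, real_inner_comm, norm_smul,
      mul_pow, Real.norm_eq_abs, sq_abs]
    ring
  have hinner := mul_le_mul_of_nonneg_left (hwqc z) (by positivity : 0 ≤ 2 * η)
  have hnorm := mul_le_mul_of_nonneg_left
    (sq_norm_gradient_le_of_lipschitz_gradient hf hL hL0 hmin z) (sq_nonneg η)
  have hsmall : η ^ 2 * (2 * L * (f z - f xstar)) ≤ τ * η * (f z - f xstar) := by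
    have := mul_le_mul_of_nonneg_right hητ (mul_nonneg hη hgap)
    linarith
  linarith

end Smooth

theorem Finset.sum_range_le_of_le_sub_add {α : Type*} [AddCommGroup α] [PartialOrder α]
    [IsOrderedAddMonoid α] {a c e : ℕ → α} (h : ∀ i, a (i + 1) ≤ a i - c i + e i) {n : ℕ}
    (ha : 0 ≤ a n) :
    ∑ i ∈ Finset.range n, c i ≤ a 0 + ∑ i ∈ Finset.range n, e i := by
  calc ∑ i ∈ Finset.range n, c i ≤ ∑ i ∈ Finset.range n, (a i - a (i + 1) + e i) := by
        refine Finset.sum_le_sum fun i _ => ?_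
        have := h i
        rw [sub_add_eq_add_sub, le_sub_iff_add_le] at this
        rwa [sub_add_eq_add_sub, le_sub_iff_add_le, add_comm]
    _ = a 0 - a n + ∑ i ∈ Finset.range n, e i := by
        rw [Finset.sum_add_distrib, Finset.sum_range_sub']
    _ ≤ a 0 + ∑ i ∈ Finset.range n, e i := by
        gcongr
        exact sub_le_self _ ha

section Stochastic

variable {Ω : Type*} {m m0 : MeasurableSpace Ω} {μ : Measure Ω}
  {E : Type*} [NormedAddCommGroup E] [InnerProductSpace ℝ E]

theorem MeasureTheory.MemLp.integrable_inner {Y Z : Ω → E} (hY : MemLp Y 2 μ) (hZ : MemLp Z 2 μ) :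
    Integrable (fun ω => ⟪Y ω, Z ω⟫) μ := by
  refine (L2.integrable_inner (𝕜 := ℝ) (hY.toLp Y) (hZ.toLp Z)).congr ?_
  filter_upwards [hY.coeFn_toLp, hZ.coeFn_toLp] with ω hYω hZω
  rw [hYω, hZω]

theorem integral_le_of_ae_condExp_le [IsProbabilityMeasure μ] (hm : m ≤ m0) {g : Ω → ℝ} {c : ℝ}
    (h : ∀ᵐ ω ∂μ, μ[g|m] ω ≤ c) : ∫ ω, g ω ∂μ ≤ c := by
  rw [← integral_condExp hm]
  simpa using integral_mono_ae integrable_condExp (integrable_const c) h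

variable [CompleteSpace E] [IsFiniteMeasure μ]

theorem condExp_sub_ae_eq_zero (hm : m ≤ m0) {W V : Ω → E} (hW : Integrable W μ)
    (hV : StronglyMeasurable[m] V) (hVi : Integrable V μ) (hWV : μ[W|m] =ᵐ[μ] V) :
    μ[W - V|m] =ᵐ[μ] 0 := by
  filter_upwards [condExp_sub hW hVi m, hWV] with ω hsub hWω
  rw [hsub, Pi.sub_apply, hWω, condExp_of_stronglyMeasurable hm hV hVi, sub_self, Pi.zero_apply]

theorem integral_inner_eq_zero_of_condExp_eq_zero (hm : m ≤ m0) {Y D : Ω → E}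
    (hY : StronglyMeasurable[m] Y) (hYD : Integrable (fun ω => ⟪Y ω, D ω⟫) μ)
    (hD : Integrable D μ) (hcond : μ[D|m] =ᵐ[μ] 0) :
    ∫ ω, ⟪Y ω, D ω⟫ ∂μ = 0 := by
  have hpull : μ[fun ω => ⟪Y ω, D ω⟫|m] =ᵐ[μ] fun ω => ⟪Y ω, μ[D|m] ω⟫ :=
    condExp_bilin_of_stronglyMeasurable_left (innerSL ℝ) hY hYD hD
  rw [← integral_condExp hm, integral_congr_ae hpull]
  refine integral_eq_zero_of_ae ?_
  filter_upwards [hcond] with ω hω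
  rw [hω, Pi.zero_apply, inner_zero_right, Pi.zero_apply]

theorem integral_norm_sub_smul_sq_of_condExp_eq_zero (hm : m ≤ m0) {Y D : Ω → E}
    (hY : StronglyMeasurable[m] Y) (hY2 : MemLp Y 2 μ) (hD2 : MemLp D 2 μ)
    (hcond : μ[D|m] =ᵐ[μ] 0) (c : ℝ) :
    ∫ ω, ‖Y ω - c • D ω‖ ^ 2 ∂μ = ∫ ω, ‖Y ω‖ ^ 2 ∂μ + c ^ 2 * ∫ ω, ‖D ω‖ ^ 2 ∂μ := by
  have hYD := hY2.integrable_inner hD2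
  have hexpand : ∀ ω, ‖Y ω - c • D ω‖ ^ 2
      = ‖Y ω‖ ^ 2 - 2 * c * ⟪Y ω, D ω⟫ + c ^ 2 * ‖D ω‖ ^ 2 := fun ω => by
    rw [norm_sub_sq_real, real_inner_smul_right, norm_smul, mul_pow, Real.norm_eq_abs, sq_abs]
    ring
  have hY2i : Integrable (fun ω => ‖Y ω‖ ^ 2) μ := hY2.integrable_norm_pow'
  have hcross : Integrable (fun ω => 2 * c * ⟪Y ω, D ω⟫) μ := hYD.const_mul _
  have hD2i : Integrable (fun ω => c ^ 2 * ‖D ω‖ ^ 2) μ := hD2.integrable_norm_pow'.const_mul _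
  simp_rw [hexpand]
  have hdiff : Integrable (fun ω => ‖Y ω‖ ^ 2 - 2 * c * ⟪Y ω, D ω⟫) μ := hY2i.sub hcross
  rw [integral_add hdiff hD2i, integral_sub hY2i hcross, integral_const_mul,
    integral_const_mul, integral_inner_eq_zero_of_condExp_eq_zero hm hY hYD
      (hD2.integrable one_le_two) hcond]
  ring

end Stochastic

section SGD

variable {Ω : Type*} {m m0 : MeasurableSpace Ω} {μ : Measure Ω}
  {E : Type*} [NormedAddCommGroup E] [InnerProductSpace ℝ E] [CompleteSpace E]
  {f : E → ℝ} {L : ℝ} {xstar : E}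

theorem memLp_gradient_comp (hL : ∀ x y, ‖gradient f x - gradient f y‖ ≤ L * ‖x - y‖)
    (hmin : ∀ x, f xstar ≤ f x) {X : Ω → E} (hX2 : MemLp X 2 μ) [IsFiniteMeasure μ] :
    MemLp (fun ω => gradient f (X ω)) 2 μ :=
  (hX2.sub (memLp_const xstar)).of_le_mul
    ((continuous_gradient_of_lipschitz hL).comp_aestronglyMeasurable hX2.1)
    (ae_of_all _ fun ω => norm_gradient_le_of_lipschitz_gradient hL hmin (X ω))

theorem integrable_sub_comp_of_lipschitz_gradient (hf : Differentiable ℝ f)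
    (hL : ∀ x y, ‖gradient f x - gradient f y‖ ≤ L * ‖x - y‖) (hmin : ∀ x, f xstar ≤ f x)
    {X : Ω → E} (hX2 : MemLp X 2 μ) [IsFiniteMeasure μ] :
    Integrable (fun ω => f (X ω) - f xstar) μ := by
  refine Integrable.mono' ((hX2.sub (memLp_const xstar)).integrable_norm_pow'.const_mul (L / 2))
    ((hf.continuous.comp_aestronglyMeasurable hX2.1).sub aestronglyMeasurable_const)
    (ae_of_all _ fun ω => ?_)
  rw [Real.norm_eq_abs, abs_of_nonneg (sub_nonneg.mpr (hmin (X ω)))]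
  exact sub_le_mul_sq_norm_sub_of_lipschitz_gradient hf hL hmin (X ω)

/-- Split `X - η G - x⋆ = (X - η ∇f(X) - x⋆) - η (G - ∇f(X))`: the first part is a deterministic
gradient step, the second is conditionally centred noise orthogonal to it. -/
theorem integral_norm_sgd_step_sub_sq_le [IsProbabilityMeasure μ] (hm : m ≤ m0)
    (hf : Differentiable ℝ f) (hL : ∀ x y, ‖gradient f x - gradient f y‖ ≤ L * ‖x - y‖)
    (hL0 : 0 < L) (hmin : ∀ x, f xstar ≤ f x) {τ : ℝ}
    (hwqc : ∀ z, τ * (f z - f xstar) ≤ ⟪gradient f z, z - xstar⟫)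
    {X G : Ω → E} (hX : StronglyMeasurable[m] X) (hX2 : MemLp X 2 μ) (hG2 : MemLp G 2 μ)
    (hGmean : μ[G|m] =ᵐ[μ] fun ω => gradient f (X ω)) {s : ℝ}
    (hvar : ∀ᵐ ω ∂μ, μ[fun ω' => ‖G ω' - gradient f (X ω')‖ ^ 2|m] ω ≤ s)
    {η : ℝ} (hη : 0 ≤ η) (hητ : 2 * L * η ≤ τ) :
    ∫ ω, ‖X ω - η • G ω - xstar‖ ^ 2 ∂μ
      ≤ ∫ ω, ‖X ω - xstar‖ ^ 2 ∂μ - τ * η * ∫ ω, (f (X ω) - f xstar) ∂μ + η ^ 2 * s := by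
  have hgrad : StronglyMeasurable[m] fun ω => gradient f (X ω) :=
    (continuous_gradient_of_lipschitz hL).comp_stronglyMeasurable hX
  have hgrad2 := memLp_gradient_comp hL hmin hX2 (xstar := xstar)
  have hgap := integrable_sub_comp_of_lipschitz_gradient hf hL hmin hX2
  have hdist : Integrable (fun ω => ‖X ω - xstar‖ ^ 2) μ :=
    (hX2.sub (memLp_const xstar)).integrable_norm_pow'
  have hnoise : μ[fun ω => G ω - gradient f (X ω)|m] =ᵐ[μ] 0 :=
    condExp_sub_ae_eq_zero hm (hG2.integrable one_le_two) hgrad (hgrad2.integrable one_le_two)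
      hGmean
  have hY : StronglyMeasurable[m] fun ω => X ω - η • gradient f (X ω) - xstar :=
    (hX.sub (hgrad.const_smul η)).sub stronglyMeasurable_const
  have hY2 : MemLp (fun ω => X ω - η • gradient f (X ω) - xstar) 2 μ :=
    (hX2.sub (hgrad2.const_smul η)).sub (memLp_const xstar)
  have hsplit : ∀ ω, X ω - η • G ω - xstar
      = (X ω - η • gradient f (X ω) - xstar) - η • (G ω - gradient f (X ω)) := fun ω => by
    rw [smul_sub]
    abel
  simp_rw [hsplit]
  rw [integral_norm_sub_smul_sq_of_condExp_eq_zero (D := fun ω => G ω - gradient f (X ω)) hm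
    hY hY2 (hG2.sub hgrad2) hnoise η]
  have hstep : ∫ ω, ‖X ω - η • gradient f (X ω) - xstar‖ ^ 2 ∂μ
      ≤ ∫ ω, ‖X ω - xstar‖ ^ 2 ∂μ - τ * η * ∫ ω, (f (X ω) - f xstar) ∂μ := by
    rw [← integral_const_mul, ← integral_sub hdist (hgap.const_mul _)]
    exact integral_mono hY2.integrable_norm_pow'
      (hdist.sub (hgap.const_mul _))
      fun ω => norm_sub_smul_gradient_sub_sq_le hf hL hL0 hmin hwqc hη hητ (X ω)
  have hvar' := integral_le_of_ae_condExp_le hm hvar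
  nlinarith [mul_le_mul_of_nonneg_left hvar' (sq_nonneg η)]

end SGD

theorem sgd_weighted_avg_suboptimality_bound_wqc_general
    {Ω : Type*} {m0 : MeasurableSpace Ω} {μ : Measure Ω} [IsProbabilityMeasure μ]
    {d : ℕ} (f : EuclideanSpace ℝ (Fin d) → ℝ) (L : ℝ)
    (hf : ContDiff ℝ 1 f)
    (hL : ∀ x y : EuclideanSpace ℝ (Fin d), ‖gradient f x - gradient f y‖ ≤ L * ‖x - y‖)
    (xstar : EuclideanSpace ℝ (Fin d)) (hmin : ∀ x, f xstar ≤ f x)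
    (τ : ℝ) (hτ : 0 < τ)
    (hwqc : ∀ z : EuclideanSpace ℝ (Fin d), τ * (f z - f xstar) ≤ ⟪gradient f z, z - xstar⟫)
    (ℱ : Filtration ℕ m0)
    (x G : ℕ → Ω → EuclideanSpace ℝ (Fin d))
    (x0 : EuclideanSpace ℝ (Fin d)) (hx0 : x 0 = fun _ => x0)
    (hx_meas : ∀ k, Measurable[ℱ k] (x k))
    (σsq : ℝ)
    (b : ℕ → ℝ)
    (h : ℝ) (hh : 0 < h)
    (ψ : ℕ → ℝ) (hψpos : ∀ k, 0 < ψ k) (hψle : ∀ k, ψ k ≤ 1)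
    (η : ℕ → ℝ) (hη : ∀ k, η k = h * ψ k)
    (hupdate : ∀ k ω, x (k + 1) ω = x k ω - η k • G k ω)
    (hG2 : ∀ k, MemLp (G k) 2 μ)
    (hGmean : ∀ k, μ[G k | ℱ k] =ᵐ[μ] fun ω => gradient f (x k ω))
    (hGvar : ∀ k, ∀ᵐ ω ∂μ,
      (μ[fun ω' => ‖G k ω' - gradient f (x k ω')‖ ^ 2 | ℱ k]) ω ≤ d * σsq / b k)
    (hhτ : h ≤ τ / (2 * L))
    (k : ℕ) :
    (1 / ∑ i ∈ Finset.range (k + 1), ψ i) *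
        ∑ i ∈ Finset.range (k + 1), ψ i * ∫ ω, (f (x i ω) - f xstar) ∂μ ≤
      ‖x0 - xstar‖ ^ 2 / (τ * h * ∑ i ∈ Finset.range (k + 1), ψ i)
        + (d * h * σsq / (τ * ∑ i ∈ Finset.range (k + 1), ψ i)) *
            ∑ i ∈ Finset.range (k + 1), ψ i ^ 2 / b i := by
  have hL0 : 0 < L := by
    by_contra! hL0
    linarith [div_nonpos_of_nonneg_of_nonpos hτ.le (by linarith : 2 * L ≤ 0)]
  have hητ : ∀ i, 2 * L * (h * ψ i) ≤ τ := fun i => by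
    rw [← le_div_iff₀' (by positivity)]
    exact (mul_le_of_le_one_right hh.le (hψle i)).trans hhτ
  have hx2 : ∀ i, MemLp (x i) 2 μ := by
    intro i
    induction i with
    | zero => exact hx0 ▸ memLp_const x0
    | succ i ih => exact funext (hupdate i) ▸ ih.sub ((hG2 i).const_smul (η i))
  have hdescent : ∀ i, ∫ ω, ‖x (i + 1) ω - xstar‖ ^ 2 ∂μ
      ≤ ∫ ω, ‖x i ω - xstar‖ ^ 2 ∂μ - τ * h * (ψ i * ∫ ω, (f (x i ω) - f xstar) ∂μ)
        + h ^ 2 * (d * σsq) * (ψ i ^ 2 / b i) := fun i => by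
    simp_rw [hupdate i, hη]
    refine (integral_norm_sgd_step_sub_sq_le (ℱ.le i) (hf.differentiable one_ne_zero) hL hL0
      hmin hwqc (hx_meas i).stronglyMeasurable (hx2 i) (hG2 i) (hGmean i) (hGvar i)
      (mul_pos hh (hψpos i)).le (hητ i)).trans_eq ?_
    ring
  have htel := Finset.sum_range_le_of_le_sub_add (a := fun i => ∫ ω, ‖x i ω - xstar‖ ^ 2 ∂μ)
    hdescent (integral_nonneg fun ω => sq_nonneg ‖x (k + 1) ω - xstar‖)
  rw [hx0, integral_const, probReal_univ, one_smul, ← Finset.mul_sum, ← Finset.mul_sum] at htel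
  set Φ := ∑ i ∈ Finset.range (k + 1), ψ i
  set S := ∑ i ∈ Finset.range (k + 1), ψ i * ∫ ω, (f (x i ω) - f xstar) ∂μ
  set T := ∑ i ∈ Finset.range (k + 1), ψ i ^ 2 / b i
  have hΦ : 0 < Φ := Finset.sum_pos (fun i _ => hψpos i) Finset.nonempty_range_add_one
  calc 1 / Φ * S = τ * h * S / (τ * h * Φ) := by field_simp
    _ ≤ (‖x0 - xstar‖ ^ 2 + h ^ 2 * (d * σsq) * T) / (τ * h * Φ) := by gcongr
    _ = _ := by field_simp

/-- **Randomized-iterate guarantee for mini-batch SGD on weakly-quasi-convex functions.**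
If `f` is `τ`-weakly-quasi-convex and `0 < h ≤ τ/(2L)` then for every `k`,
with `φ_{k+1} = Σ_{i=0}^k ψ_i`,
`(1/φ_{k+1}) Σ_{i=0}^k ψ_i E[f(x_i) − f(x⋆)]
  ≤ ‖x₀ − x⋆‖²/(τ h φ_{k+1}) + (d h σ⋆²/(τ φ_{k+1})) Σ_{i=0}^k ψ_i²/b_i`. -/
theorem sgd_weighted_avg_suboptimality_bound_wqc
    {Ω : Type*} {m0 : MeasurableSpace Ω} {μ : Measure Ω} [IsProbabilityMeasure μ]
    {d : ℕ} (f : EuclideanSpace ℝ (Fin d) → ℝ) (L : ℝ)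
    (hf : ContDiff ℝ 1 f)
    (hL : ∀ x y : EuclideanSpace ℝ (Fin d), ‖gradient f x - gradient f y‖ ≤ L * ‖x - y‖)
    (xstar : EuclideanSpace ℝ (Fin d)) (hmin : ∀ x, f xstar ≤ f x)
    (τ : ℝ) (hτ : 0 < τ)
    (hwqc : ∀ z : EuclideanSpace ℝ (Fin d), τ * (f z - f xstar) ≤ ⟪gradient f z, z - xstar⟫)
    (ℱ : Filtration ℕ m0)
    (x G : ℕ → Ω → EuclideanSpace ℝ (Fin d))
    (x0 : EuclideanSpace ℝ (Fin d)) (hx0 : x 0 = fun _ => x0)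
    (hx_meas : ∀ k, Measurable[ℱ k] (x k))
    (σsq : ℝ) (hσsq : 0 ≤ σsq)
    (b : ℕ → ℝ) (hb : ∀ k, 1 ≤ b k)
    (h : ℝ) (hh : 0 < h)
    (ψ : ℕ → ℝ) (hψpos : ∀ k, 0 < ψ k) (hψle : ∀ k, ψ k ≤ 1)
    (hψ0 : ψ 0 = 1) (hψmono : ∀ k, ψ (k + 1) ≤ ψ k)
    (η : ℕ → ℝ) (hη : ∀ k, η k = h * ψ k)
    (hupdate : ∀ k ω, x (k + 1) ω = x k ω - η k • G k ω)
    (hG2 : ∀ k, MemLp (G k) 2 μ)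
    (hGmean : ∀ k, μ[G k | ℱ k] =ᵐ[μ] fun ω => gradient f (x k ω))
    (hGvar : ∀ k, ∀ᵐ ω ∂μ,
      (μ[fun ω' => ‖G k ω' - gradient f (x k ω')‖ ^ 2 | ℱ k]) ω ≤ d * σsq / b k)
    (hhτ : h ≤ τ / (2 * L))
    (k : ℕ) :
    (1 / ∑ i ∈ Finset.range (k + 1), ψ i) *
        ∑ i ∈ Finset.range (k + 1), ψ i * ∫ ω, (f (x i ω) - f xstar) ∂μ ≤
      ‖x0 - xstar‖ ^ 2 / (τ * h * ∑ i ∈ Finset.range (k + 1), ψ i)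
        + (d * h * σsq / (τ * ∑ i ∈ Finset.range (k + 1), ψ i)) *
            ∑ i ∈ Finset.range (k + 1), ψ i ^ 2 / b i :=
  sgd_weighted_avg_suboptimality_bound_wqc_general f L hf hL xstar hmin τ hτ hwqc ℱ x G x0 hx0
    hx_meas σsq b h hh ψ hψpos hψle η hη hupdate hG2 hGmean hGvar hhτ k
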